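/- arXiv:math-ph/0703035 — 5 statements merged into one kernel-verified Lean document; each statement's English description precedes it below -/
import Mathlib

section
/- If F = (F^1,…,F^k): (T^1_k)*Q → ℝ^k is a conservation law for the Hamilton–de Donder–Weyl equations, then for every integrable k-vector field X = (X_1,…,X_k) ∈ X^k_H((T^1_k)*Q) one has Σ_{A=1}^k L(X_A)F^A = 0. -/
noncomputable section

open scoped BigOperators

/-- Coordinate model (global chart) for the Whitney sum of `k` copies of the
(co)tangent bundle of `Q = ℝⁿ`: points are `(qⁱ, pᴬᵢ)` on the Hamiltonian side,
resp. `(qⁱ, vⁱᴬ)` on the Lagrangian side.  A tangent vector to this space is an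
element of the same product type. -/
abbrev KBundle (n k : ℕ) : Type := (Fin n → ℝ) × (Fin k → Fin n → ℝ)
/-- The canonical 1-form `θᴬ = pᴬᵢ dqⁱ` on `(T¹ₖ)*Q`, at the point `w`,
evaluated on a tangent vector `v`. -/
def thetaA {n k : ℕ} (A : Fin k) (w v : KBundle n k) : ℝ :=
  ∑ i, w.2 A i * v.1 i

/-- The canonical 2-form `ωᴬ = dqⁱ ∧ dpᴬᵢ` on `(T¹ₖ)*Q` (constant coefficients),
evaluated on a pair of tangent vectors. -/
def omegaA {n k : ℕ} (A : Fin k) (u v : KBundle n k) : ℝ :=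
  ∑ i, (u.1 i * v.2 A i - v.1 i * u.2 A i)
/-- `ψ : ℝᵏ → (T¹ₖ)*Q` is a solution of the Hamilton–de Donder–Weyl equations on `U`:
`∂H/∂qⁱ ∘ ψ = −Σ_A ∂ψᴬᵢ/∂tᴬ` and `∂H/∂pᴬᵢ ∘ ψ = ∂ψⁱ/∂tᴬ` (all maps are C^∞). -/
def IsHDWSolutionOn {n k : ℕ} (H : KBundle n k → ℝ)
    (ψ : (Fin k → ℝ) → KBundle n k) (U : Set (Fin k → ℝ)) : Prop :=
  ContDiffOn ℝ (⊤ : ℕ∞) ψ U ∧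
  ∀ t ∈ U, ∀ i : Fin n,
    (fderiv ℝ H (ψ t) (Pi.single i 1, 0)
        = - ∑ A, fderiv ℝ (fun s => (ψ s).2 A i) t (Pi.single A 1)) ∧
    ∀ A : Fin k,
      fderiv ℝ H (ψ t) (0, Pi.single A (Pi.single i 1))
        = fderiv ℝ (fun s => (ψ s).1 i) t (Pi.single A 1)

/-- `F = (F¹,…,Fᵏ)` is a conservation law for the Hamilton–de Donder–Weyl equations:
`Σ_A ∂(Fᴬ∘ψ)/∂tᴬ = 0` for every solution `ψ`. -/
def IsConservationLawH {n k : ℕ} (H : KBundle n k → ℝ)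
    (F : Fin k → KBundle n k → ℝ) : Prop :=
  ∀ (U : Set (Fin k → ℝ)) (ψ : (Fin k → ℝ) → KBundle n k),
    IsOpen U → IsHDWSolutionOn H ψ U →
    ∀ t ∈ U, ∑ A, fderiv ℝ (fun s => F A (ψ s)) t (Pi.single A 1) = 0
/-- The `k`-vector field `X = (X₁,…,X_k)` belongs to `X^k_H((T¹ₖ)*Q)`:
`Σ_A i(X_A)ωᴬ = dH`. -/
def InXkH {n k : ℕ} (H : KBundle n k → ℝ)
    (X : Fin k → KBundle n k → KBundle n k) : Prop :=
  ∀ w v, ∑ A, omegaA A (X A w) v = fderiv ℝ H w v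
/-- A `k`-vector field `X = (X₁,…,X_k)` on `E` is integrable: through every point
there passes an integral section `ψ`, i.e. `ψ_*(∂/∂tᴬ) = X_A ∘ ψ` on a neighbourhood of `0`. -/
def IsIntegrable {E : Type*} [NormedAddCommGroup E] [NormedSpace ℝ E] {k : ℕ}
    (X : Fin k → E → E) : Prop :=
  ∀ w : E, ∃ (U : Set (Fin k → ℝ)) (ψ : (Fin k → ℝ) → E),
    IsOpen U ∧ (0 : Fin k → ℝ) ∈ U ∧ ψ 0 = w ∧ ContDiffOn ℝ (⊤ : ℕ∞) ψ U ∧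
    ∀ t ∈ U, ∀ A, fderiv ℝ ψ t (Pi.single A 1) = X A (ψ t)

/-- Proposition : if `F = (F¹,…,Fᵏ)` is a conservation law for the Hamilton–de
Donder–Weyl equations, then for every integrable `k`-vector field
`X = (X₁,…,X_k) ∈ X^k_H((T¹ₖ)*Q)` one has `Σ_A L(X_A)Fᴬ = 0`. -/
theorem conservation_law_annihilated_by_hamiltonian_k_vector_fields
    {n k : ℕ} (H : KBundle n k → ℝ) (hH : ContDiff ℝ (⊤ : ℕ∞) H)
    (F : Fin k → KBundle n k → ℝ) (hF : ∀ A, ContDiff ℝ (⊤ : ℕ∞) (F A))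
    (hcons : IsConservationLawH H F)
    (X : Fin k → KBundle n k → KBundle n k) (hXsmooth : ∀ A, ContDiff ℝ (⊤ : ℕ∞) (X A))
    (hX : InXkH H X) (hint : IsIntegrable X) :
    ∀ w : KBundle n k, ∑ A, fderiv ℝ (F A) w (X A w) = 0 := by
  intro w
  obtain ⟨U, ψ, hU, h0, hψ0, hψsm, hψint⟩ := hint w
  have hψdiff : ∀ t ∈ U, DifferentiableAt ℝ ψ t := fun t ht =>
    (hψsm.contDiffAt (hU.mem_nhds ht)).differentiableAt (by simp)
  -- projections as continuous linear maps
  have hproj1 : ∀ (i : Fin n) (t : Fin k → ℝ), t ∈ U →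
      fderiv ℝ (fun s => (ψ s).1 i) t =
        (((ContinuousLinearMap.proj i :
            (Fin n → ℝ) →L[ℝ] ℝ).comp
          (ContinuousLinearMap.fst ℝ (Fin n → ℝ) (Fin k → Fin n → ℝ))).comp
          (fderiv ℝ ψ t)) := by
    intro i t ht
    set L := ((ContinuousLinearMap.proj i :
            (Fin n → ℝ) →L[ℝ] ℝ).comp
          (ContinuousLinearMap.fst ℝ (Fin n → ℝ) (Fin k → Fin n → ℝ)))
    have h := fderiv_comp t L.differentiableAt (hψdiff t ht)
    rw [L.fderiv] at h
    exact h
  have hproj2 : ∀ (A : Fin k) (i : Fin n) (t : Fin k → ℝ), t ∈ U →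
      fderiv ℝ (fun s => (ψ s).2 A i) t =
        ((((ContinuousLinearMap.proj i :
            (Fin n → ℝ) →L[ℝ] ℝ).comp
          (ContinuousLinearMap.proj A :
            (Fin k → Fin n → ℝ) →L[ℝ] (Fin n → ℝ))).comp
          (ContinuousLinearMap.snd ℝ (Fin n → ℝ) (Fin k → Fin n → ℝ))).comp
          (fderiv ℝ ψ t)) := by
    intro A i t ht
    set L := (((ContinuousLinearMap.proj i :
            (Fin n → ℝ) →L[ℝ] ℝ).comp
          (ContinuousLinearMap.proj A :
            (Fin k → Fin n → ℝ) →L[ℝ] (Fin n → ℝ))).comp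
          (ContinuousLinearMap.snd ℝ (Fin n → ℝ) (Fin k → Fin n → ℝ)))
    have h := fderiv_comp t L.differentiableAt (hψdiff t ht)
    rw [L.fderiv] at h
    exact h
  have hsol : IsHDWSolutionOn H ψ U := by
    refine ⟨hψsm, fun t ht i => ?_⟩
    have hkey : ∀ A, fderiv ℝ ψ t (Pi.single A 1) = X A (ψ t) := hψint t ht
    constructor
    · have hw := (hX (ψ t) (Pi.single i 1, 0)).symm
      rw [hw]
      have h1 : ∀ A : Fin k, omegaA A (X A (ψ t)) (Pi.single i 1, 0)
          = -(X A (ψ t)).2 A i := by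
        intro A
        simp [omegaA, Pi.single_apply, ite_mul, Finset.sum_sub_distrib]
      rw [Finset.sum_congr rfl (fun A _ => h1 A)]
      rw [← Finset.sum_neg_distrib]
      refine Finset.sum_congr rfl (fun A _ => ?_)
      rw [hproj2 A i t ht]
      simp [hkey A]
    · intro A
      have hw := (hX (ψ t) (0, Pi.single A (Pi.single i 1))).symm
      rw [hw]
      have h1 : ∀ B : Fin k, omegaA B (X B (ψ t)) (0, Pi.single A (Pi.single i 1))
          = if B = A then (X B (ψ t)).1 i else 0 := by
        intro B
        by_cases hBA : B = A <;>
          simp [omegaA, hBA, Pi.single_apply, mul_ite, Finset.sum_sub_distrib]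
      rw [Finset.sum_congr rfl (fun B _ => h1 B), Finset.sum_ite_eq' Finset.univ A,
        if_pos (Finset.mem_univ A)]
      rw [hproj1 i t ht]
      simp [hkey A]
  have hc := hcons U ψ hU hsol 0 h0
  have hterm : ∀ A : Fin k,
      fderiv ℝ (fun s => F A (ψ s)) 0 (Pi.single A 1) = fderiv ℝ (F A) w (X A w) := by
    intro A
    have hdF : DifferentiableAt ℝ (F A) (ψ 0) := ((hF A).differentiable (by simp)) (ψ 0)
    have := fderiv_comp (0 : Fin k → ℝ) hdF (hψdiff 0 h0)
    rw [show (fun s => F A (ψ s)) = (F A) ∘ ψ from rfl, this]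
    simp [hψint 0 h0 A, hψ0]
  rw [← Finset.sum_congr rfl (fun A _ => hterm A)]
  exact hc
end
end

section
/- If Φ: (T^1_k)*Q → (T^1_k)*Q is a Cartan symmetry of the k-symplectic Hamiltonian system ((T^1_k)*Q, ω^A, H) and X = (X_1,…,X_k) ∈ X^k_H((T^1_k)*Q), then the pushforward Φ_*X = (Φ_*X_1,…,Φ_*X_k) also belongs to X^k_H((T^1_k)*Q). -/
noncomputable section

open scoped BigOperators

/-- Proposition : if `Φ` is a Cartan symmetry of the `k`-symplectic Hamiltonian
system `((T¹ₖ)*Q, ωᴬ, H)` (i.e. `Φ*ωᴬ = ωᴬ` and `Φ*H = H` up to a constant) and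
`X = (X₁,…,X_k) ∈ X^k_H((T¹ₖ)*Q)`, then the pushforward
`Φ_*X = (Φ_*X₁,…,Φ_*X_k)` also belongs to `X^k_H((T¹ₖ)*Q)`. -/
theorem cartan_symmetry_pushforward_in_XkH
    {n k : ℕ} (H : KBundle n k → ℝ) (hH : ContDiff ℝ (⊤ : ℕ∞) H)
    (Φ Φinv : KBundle n k → KBundle n k)
    (hΦ : ContDiff ℝ (⊤ : ℕ∞) Φ) (hΦinv : ContDiff ℝ (⊤ : ℕ∞) Φinv)
    (hleft : Function.LeftInverse Φinv Φ) (hright : Function.RightInverse Φinv Φ)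
    (hω : ∀ (A : Fin k) (w u v : KBundle n k),
      omegaA A (fderiv ℝ Φ w u) (fderiv ℝ Φ w v) = omegaA A u v)
    (hHinv : ∃ c : ℝ, ∀ w, H (Φ w) = H w + c)
    (X : Fin k → KBundle n k → KBundle n k) (hX : InXkH H X) :
    InXkH H (fun A w => fderiv ℝ Φ (Φinv w) (X A (Φinv w))) := by
  intro w v
  obtain ⟨c, hc⟩ := hHinv
  set u := Φinv w with hu
  have hΦu : Φ u = w := hright w
  have dH := (hH.differentiable (by simp))
  have dΦ := (hΦ.differentiable (by simp))
  have dΦinv := (hΦinv.differentiable (by simp))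
  -- derivative of Φ ∘ Φinv is identity
  have hcompfun : Φ ∘ Φinv = id := funext hright
  have hfd : fderiv ℝ (Φ ∘ Φinv) w = ContinuousLinearMap.id ℝ (KBundle n k) := by
    rw [hcompfun]; exact fderiv_id
  have hchain : fderiv ℝ (Φ ∘ Φinv) w =
      (fderiv ℝ Φ u).comp (fderiv ℝ Φinv w) :=
    fderiv_comp w (dΦ u) (dΦinv w)
  have hid : ∀ x, fderiv ℝ Φ u (fderiv ℝ Φinv w x) = x := by
    intro x
    have := congrArg (fun L => L x) (hchain.symm.trans hfd)
    simpa using this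
  -- H ∘ Φ = H + c, hence fderiv (H∘Φ) u = fderiv H u
  have hHΦ : (H ∘ Φ) = fun x => H x + c := funext fun x => hc x
  have hfdH : fderiv ℝ (H ∘ Φ) u = fderiv ℝ H u := by
    rw [hHΦ]
    exact fderiv_add_const c
  have hchainH : fderiv ℝ (H ∘ Φ) u =
      (fderiv ℝ H w).comp (fderiv ℝ Φ u) := by
    have := fderiv_comp u (dH (Φ u)) (dΦ u)
    rwa [hΦu] at this
  have key : ∀ z, fderiv ℝ H u z = fderiv ℝ H w (fderiv ℝ Φ u z) := by
    intro z
    have := congrArg (fun L => L z) (hfdH.symm.trans hchainH)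
    simpa using this
  calc ∑ A, omegaA A (fderiv ℝ Φ u (X A u)) v
      = ∑ A, omegaA A (fderiv ℝ Φ u (X A u)) (fderiv ℝ Φ u (fderiv ℝ Φinv w v)) := by
        rw [hid v]
    _ = ∑ A, omegaA A (X A u) (fderiv ℝ Φinv w v) := by
        simp only [hω]
    _ = fderiv ℝ H u (fderiv ℝ Φinv w v) := hX u _
    _ = fderiv ℝ H w v := by rw [key, hid]
end
end

section
/- (Noether.) If Y ∈ X((T^1_k)*Q) is an infinitesimal Cartan symmetry of the k-symplectic Hamiltonian system ((T^1_k)*Q, ω^A, H), and f^A ∈ C^∞(U_p) are local functions with i(Y)ω^A = df^A on a neighbourhood U_p, then for every k-vector field X = (X_1,…,X_k) ∈ X^k_H((T^1_k)*Q) one has Σ_{A=1}^k L(X_A)f^A = 0 on U_p. -/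
noncomputable section

open scoped BigOperators

/-- Theorem (Noether) : if `Y` is an infinitesimal Cartan symmetry of the
`k`-symplectic Hamiltonian system `((T¹ₖ)*Q, ωᴬ, H)` (i.e. `L(Y)ωᴬ = 0` and
`L(Y)H = 0`) and `fᴬ ∈ C^∞(U)` are local functions with `i(Y)ωᴬ = dfᴬ` on a
neighbourhood `U`, then for every `k`-vector field `X = (X₁,…,X_k) ∈ X^k_H((T¹ₖ)*Q)`
one has `Σ_A L(X_A)fᴬ = 0` on `U`. -/
theorem noether_conserved_along_XkH
    {n k : ℕ} (H : KBundle n k → ℝ) (hH : ContDiff ℝ (⊤ : ℕ∞) H)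
    (Y : KBundle n k → KBundle n k) (hY : ContDiff ℝ (⊤ : ℕ∞) Y)
    (hLω : ∀ (A : Fin k) (w u v : KBundle n k),
      omegaA A (fderiv ℝ Y w u) v + omegaA A u (fderiv ℝ Y w v) = 0)
    (hLH : ∀ w, fderiv ℝ H w (Y w) = 0)
    (U : Set (KBundle n k)) (hU : IsOpen U)
    (f : Fin k → KBundle n k → ℝ)
    (hfdiff : ∀ A, DifferentiableOn ℝ (f A) U)
    (hf : ∀ A : Fin k, ∀ w ∈ U, ∀ v, fderiv ℝ (f A) w v = omegaA A (Y w) v)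
    (X : Fin k → KBundle n k → KBundle n k) (hX : InXkH H X) :
    ∀ w ∈ U, ∑ A, fderiv ℝ (f A) w (X A w) = 0 := by
  intro w hw
  have anti : ∀ (A : Fin k) (u v : KBundle n k), omegaA A u v = - omegaA A v u := by
    intro A u v
    simp only [omegaA, ← Finset.sum_neg_distrib]
    exact Finset.sum_congr rfl fun i _ => by ring
  calc ∑ A, fderiv ℝ (f A) w (X A w)
      = ∑ A, omegaA A (Y w) (X A w) := by
        exact Finset.sum_congr rfl fun A _ => hf A w hw (X A w)
    _ = - ∑ A, omegaA A (X A w) (Y w) := by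
        rw [← Finset.sum_neg_distrib]
        exact Finset.sum_congr rfl fun A _ => anti A (Y w) (X A w)
    _ = - fderiv ℝ H w (Y w) := by rw [hX w (Y w)]
    _ = 0 := by rw [hLH w]; ring
end
end

section
/- (Noether's theorem, Lagrangian version.) Let L be a regular Lagrangian and Y ∈ X(T^1_kQ) an infinitesimal Cartan symmetry of the k-symplectic Lagrangian system (T^1_kQ, ω_L^A, E_L). Then for every p ∈ T^1_kQ there is an open neighbourhood U_p of p such that the functions f^A = i(Y)θ_L^A − ζ^A (A = 1,…,k), where i(Y)ω_L^A = df^A and L(Y)θ_L^A = dζ^A on U_p, define a conservation law f = (f^1,…,f^k): for every solution φ: ℝ^k → Q of the Euler–Lagrange equations, Σ_{A=1}^k ∂(f^A∘φ^{(1)})/∂t^A = 0 on U_p. -/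
noncomputable section

open scoped BigOperators

/-- `∂L/∂vⁱᴬ` at `w ∈ T¹ₖQ`. -/
def dLv {n k : ℕ} (L : KBundle n k → ℝ) (A : Fin k) (i : Fin n) (w : KBundle n k) : ℝ :=
  fderiv ℝ L w (0, Pi.single A (Pi.single i 1))

/-- `∂L/∂qⁱ` at `w ∈ T¹ₖQ`. -/
def dLq {n k : ℕ} (L : KBundle n k → ℝ) (i : Fin n) (w : KBundle n k) : ℝ :=
  fderiv ℝ L w (Pi.single i 1, 0)

/-- The Lagrangian 1-form `θ_Lᴬ = dL∘Sᴬ = (∂L/∂vⁱᴬ) dqⁱ` at the point `w`,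
evaluated on a tangent vector `u`. -/
def thetaL {n k : ℕ} (L : KBundle n k → ℝ) (A : Fin k) (w u : KBundle n k) : ℝ :=
  ∑ i, dLv L A i w * u.1 i

/-- The Lagrangian 2-form `ω_Lᴬ = −dθ_Lᴬ` at the point `w`, evaluated on a pair of
(constant) tangent vectors `u, v`:
`ω_Lᴬ(u,v) = v(θ_Lᴬ(u)) − u(θ_Lᴬ(v))`. -/
def omegaL {n k : ℕ} (L : KBundle n k → ℝ) (A : Fin k) (w u v : KBundle n k) : ℝ :=
  fderiv ℝ (fun x => thetaL L A x u) w v - fderiv ℝ (fun x => thetaL L A x v) w u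

/-- The energy `E_L = Δ(L) − L`, where `Δ = vⁱᴬ ∂/∂vⁱᴬ` is the Liouville vector field. -/
def energyL {n k : ℕ} (L : KBundle n k → ℝ) (w : KBundle n k) : ℝ :=
  fderiv ℝ L w (0, w.2) - L w

/-- `L` is a regular Lagrangian: the Hessian matrix `(∂²L/∂vⁱᴬ∂vʲ_B)` is
nonsingular at every point. -/
def RegularLag {n k : ℕ} (L : KBundle n k → ℝ) : Prop :=
  ∀ w : KBundle n k,
    (Matrix.of fun (p q : Fin k × Fin n) =>
      fderiv ℝ (fun x => dLv L p.1 p.2 x) w (0, Pi.single q.1 (Pi.single q.2 1))).det ≠ 0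
/-- The first prolongation `φ⁽¹⁾ : ℝᵏ → T¹ₖQ` of a map `φ : ℝᵏ → Q`,
`φ⁽¹⁾(t) = (φⁱ(t), ∂φⁱ/∂tᴬ(t))`. -/
def prolong1 {n k : ℕ} (φ : (Fin k → ℝ) → (Fin n → ℝ)) (t : Fin k → ℝ) : KBundle n k :=
  (φ t, fun A i => fderiv ℝ (fun s => φ s i) t (Pi.single A 1))
/-- `φ : ℝᵏ → Q` is a solution of the Euler–Lagrange equations on `U`:
`Σ_A ∂/∂tᴬ(∂L/∂vⁱᴬ ∘ φ⁽¹⁾) = ∂L/∂qⁱ ∘ φ⁽¹⁾` (all maps are C^∞). -/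
def IsELSolutionOn {n k : ℕ} (L : KBundle n k → ℝ)
    (φ : (Fin k → ℝ) → (Fin n → ℝ)) (U : Set (Fin k → ℝ)) : Prop :=
  ContDiffOn ℝ (⊤ : ℕ∞) φ U ∧
  ∀ t ∈ U, ∀ i : Fin n,
    ∑ A, fderiv ℝ (fun s => dLv L A i (prolong1 φ s)) t (Pi.single A 1)
      = dLq L i (prolong1 φ t)

/-- `F = (F¹,…,Fᵏ)` is a conservation law for the Euler–Lagrange equations:
`Σ_A ∂(Fᴬ∘φ⁽¹⁾)/∂tᴬ = 0` for every solution `φ`. -/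
def IsConservationLawL {n k : ℕ} (L : KBundle n k → ℝ)
    (F : Fin k → KBundle n k → ℝ) : Prop :=
  ∀ (U : Set (Fin k → ℝ)) (φ : (Fin k → ℝ) → (Fin n → ℝ)),
    IsOpen U → IsELSolutionOn L φ U →
    ∀ t ∈ U, ∑ A, fderiv ℝ (fun s => F A (prolong1 φ s)) t (Pi.single A 1) = 0


open scoped ContDiff

set_option maxSynthPendingDepth 5

namespace Noether

variable {n k : ℕ}

/-- The coordinate projection `u ↦ u.1 i` as a continuous linear map. -/
def pi1 (n k : ℕ) (i : Fin n) : KBundle n k →L[ℝ] ℝ :=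
  (ContinuousLinearMap.proj i).comp (ContinuousLinearMap.fst ℝ _ _)

@[simp] lemma pi1_apply (i : Fin n) (u : KBundle n k) : pi1 n k i u = u.1 i := rfl

lemma one_le_inf : (∞ : WithTop ℕ∞) ≠ 0 := by
  simp

variable {L : KBundle n k → ℝ} {Y : KBundle n k → KBundle n k}

lemma contDiff_dLv (hL : ContDiff ℝ ∞ L) (A : Fin k) (i : Fin n) :
    ContDiff ℝ ∞ (dLv L A i) :=
  (contDiff_infty_iff_fderiv.mp hL).2.clm_apply contDiff_const

/-- `θ_L^A` at `x`, as a continuous linear map. -/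
def Theta (L : KBundle n k → ℝ) (A : Fin k) (x : KBundle n k) : KBundle n k →L[ℝ] ℝ :=
  ∑ i, dLv L A i x • pi1 n k i

lemma Theta_apply (A : Fin k) (x u : KBundle n k) :
    Theta L A x u = thetaL L A x u := by
  simp [Theta, thetaL]

lemma contDiff_Theta (hL : ContDiff ℝ ∞ L) (A : Fin k) :
    ContDiff ℝ ∞ (Theta L A) :=
  ContDiff.sum fun i _ => (contDiff_dLv hL A i).smul contDiff_const

lemma contDiff_fderiv_Theta (hL : ContDiff ℝ ∞ L) (A : Fin k) :
    ContDiff ℝ ∞ (fderiv ℝ (Theta L A)) :=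
  (contDiff_Theta hL A).fderiv_right (by simp)

lemma fderiv_Theta_coord (hL : ContDiff ℝ ∞ L) (A : Fin k) (w z u : KBundle n k) :
    fderiv ℝ (Theta L A) w z u = ∑ i, fderiv ℝ (dLv L A i) w z * u.1 i := by
  have h : fderiv ℝ (Theta L A) w
      = ∑ i, (fderiv ℝ (dLv L A i) w).smulRight (pi1 n k i) := by
    have : Theta L A = fun x => ∑ i, dLv L A i x • pi1 n k i := rfl
    rw [this, fderiv_fun_sum fun i _ =>
      ((contDiff_dLv hL A i).differentiable one_le_inf w).smul_const (pi1 n k i)]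
    exact Finset.sum_congr rfl fun i _ =>
      fderiv_smul_const ((contDiff_dLv hL A i).differentiable one_le_inf w) (pi1 n k i)
  rw [h]
  simp [ContinuousLinearMap.smulRight_apply, smul_eq_mul]

lemma fderiv_thetaL_eq (hL : ContDiff ℝ ∞ L) (A : Fin k) (u w : KBundle n k) :
    fderiv ℝ (fun x => thetaL L A x u) w = (fderiv ℝ (Theta L A) w).flip u := by
  have h : (fun x => thetaL L A x u) = fun x => Theta L A x u := by
    funext x; rw [Theta_apply]
  rw [h, fderiv_clm_apply ((contDiff_Theta hL A).differentiable one_le_inf w)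
    (differentiableAt_const u)]
  simp

lemma omegaL_eq (hL : ContDiff ℝ ∞ L) (A : Fin k) (w u v : KBundle n k) :
    omegaL L A w u v
      = fderiv ℝ (Theta L A) w v u - fderiv ℝ (Theta L A) w u v := by
  rw [omegaL, fderiv_thetaL_eq hL, fderiv_thetaL_eq hL]
  rfl

end Noether

namespace Noether

variable {n k : ℕ} {L : KBundle n k → ℝ} {Y : KBundle n k → KBundle n k}

lemma fderiv_clm_apply_const {F : Type*} [NormedAddCommGroup F] [NormedSpace ℝ F]
    {c : KBundle n k → KBundle n k →L[ℝ] F} {w : KBundle n k}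
    (hc : DifferentiableAt ℝ c w) (v u : KBundle n k) :
    fderiv ℝ (fun x => c x v) w u = fderiv ℝ c w u v := by
  rw [fderiv_clm_apply hc (differentiableAt_const v)]
  simp

lemma Theta_snd_symm (hL : ContDiff ℝ ∞ L) (A : Fin k) (w u v : KBundle n k) :
    fderiv ℝ (fderiv ℝ (Theta L A)) w u v
      = fderiv ℝ (fderiv ℝ (Theta L A)) w v u :=
  second_derivative_symmetric (f := Theta L A) (f' := fderiv ℝ (Theta L A))
    (fun y => ((contDiff_Theta hL A).differentiable one_le_inf y).hasFDerivAt)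
    ((contDiff_fderiv_Theta hL A).differentiable one_le_inf w).hasFDerivAt u v

/-- The 1-form `i(Y) ω_L^A`, as a `CLM`-valued map. -/
def betaC (L : KBundle n k → ℝ) (Y : KBundle n k → KBundle n k) (A : Fin k)
    (x : KBundle n k) : KBundle n k →L[ℝ] ℝ :=
  (ContinuousLinearMap.apply ℝ ℝ (Y x)).comp (fderiv ℝ (Theta L A) x)
    - fderiv ℝ (Theta L A) x (Y x)

lemma betaC_apply (hL : ContDiff ℝ ∞ L) (A : Fin k) (x v : KBundle n k) :
    betaC L Y A x v = omegaL L A x (Y x) v := by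
  rw [omegaL_eq hL]
  simp [betaC]

lemma contDiff_betaC (hL : ContDiff ℝ ∞ L) (hY : ContDiff ℝ ∞ Y) (A : Fin k) :
    ContDiff ℝ ∞ (betaC L Y A) := by
  have happ : ContDiff ℝ ∞ (fun x =>
      (ContinuousLinearMap.apply ℝ ℝ :
        KBundle n k →L[ℝ] (KBundle n k →L[ℝ] ℝ) →L[ℝ] ℝ) (Y x)) :=
    (ContinuousLinearMap.apply ℝ ℝ :
      KBundle n k →L[ℝ] (KBundle n k →L[ℝ] ℝ) →L[ℝ] ℝ).contDiff.comp hY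
  have h1 : ContDiff ℝ ∞ (fun x =>
      (ContinuousLinearMap.compL ℝ (KBundle n k) (KBundle n k →L[ℝ] ℝ) ℝ)
        ((ContinuousLinearMap.apply ℝ ℝ :
          KBundle n k →L[ℝ] (KBundle n k →L[ℝ] ℝ) →L[ℝ] ℝ) (Y x))) :=
    (ContinuousLinearMap.compL ℝ (KBundle n k)
      (KBundle n k →L[ℝ] ℝ) ℝ).contDiff.comp happ
  exact ((h1.clm_apply (contDiff_fderiv_Theta hL A)).sub
    ((contDiff_fderiv_Theta hL A).clm_apply hY) : _)

lemma fderiv_omega_const (hL : ContDiff ℝ ∞ L) (A : Fin k) (w u v z : KBundle n k) :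
    fderiv ℝ (fun x => omegaL L A x u v) w z
      = fderiv ℝ (fderiv ℝ (Theta L A)) w z v u
        - fderiv ℝ (fderiv ℝ (Theta L A)) w z u v := by
  have hT : DifferentiableAt ℝ (fderiv ℝ (Theta L A)) w :=
    (contDiff_fderiv_Theta hL A).differentiable one_le_inf w
  have h : (fun x => omegaL L A x u v)
      = fun x => (fun y => fderiv ℝ (Theta L A) y v) x u
          - (fun y => fderiv ℝ (Theta L A) y u) x v := by
    funext x; rw [omegaL_eq hL]
  rw [h, fderiv_fun_sub ((hT.clm_apply (differentiableAt_const v)).clm_apply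
      (differentiableAt_const u))
    ((hT.clm_apply (differentiableAt_const u)).clm_apply (differentiableAt_const v))]
  rw [ContinuousLinearMap.sub_apply,
    fderiv_clm_apply_const (hT.clm_apply (differentiableAt_const v)) u z,
    fderiv_clm_apply_const (hT.clm_apply (differentiableAt_const u)) v z,
    fderiv_clm_apply_const hT v z, fderiv_clm_apply_const hT u z]

lemma fderiv_iYomega (hL : ContDiff ℝ ∞ L) (hY : ContDiff ℝ ∞ Y) (A : Fin k)
    (w v z : KBundle n k) :
    fderiv ℝ (fun x => omegaL L A x (Y x) v) w z
      = fderiv ℝ (fderiv ℝ (Theta L A)) w z v (Y w)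
        + fderiv ℝ (Theta L A) w v (fderiv ℝ Y w z)
        - fderiv ℝ (fderiv ℝ (Theta L A)) w z (Y w) v
        - fderiv ℝ (Theta L A) w (fderiv ℝ Y w z) v := by
  have hT : DifferentiableAt ℝ (fderiv ℝ (Theta L A)) w :=
    (contDiff_fderiv_Theta hL A).differentiable one_le_inf w
  have hYd : DifferentiableAt ℝ Y w := hY.differentiable one_le_inf w
  have hTv : DifferentiableAt ℝ (fun x => fderiv ℝ (Theta L A) x v) w :=
    hT.clm_apply (differentiableAt_const v)
  have hTY : DifferentiableAt ℝ (fun x => fderiv ℝ (Theta L A) x (Y x)) w :=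
    hT.clm_apply hYd
  have h : (fun x => omegaL L A x (Y x) v)
      = fun x => (fun y => fderiv ℝ (Theta L A) y v) x (Y x)
          - (fun y => fderiv ℝ (Theta L A) y (Y y)) x v := by
    funext x; rw [omegaL_eq hL]
  rw [h, fderiv_fun_sub (hTv.clm_apply hYd) (hTY.clm_apply (differentiableAt_const v))]
  rw [ContinuousLinearMap.sub_apply, fderiv_clm_apply hTv hYd,
    fderiv_clm_apply_const hTY v z, fderiv_clm_apply hT hYd]
  simp only [ContinuousLinearMap.add_apply, ContinuousLinearMap.coe_comp',
    Function.comp_apply, ContinuousLinearMap.flip_apply]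
  rw [fderiv_clm_apply_const hT v z]
  ring

lemma symm_iYomega (hL : ContDiff ℝ ∞ L) (hY : ContDiff ℝ ∞ Y) (A : Fin k)
    (hLωA : ∀ (w u v : KBundle n k),
      fderiv ℝ (fun x => omegaL L A x u v) w (Y w)
        + omegaL L A w (fderiv ℝ Y w u) v + omegaL L A w u (fderiv ℝ Y w v) = 0)
    (w u v : KBundle n k) :
    fderiv ℝ (fun x => omegaL L A x (Y x) v) w u
      = fderiv ℝ (fun x => omegaL L A x (Y x) u) w v := by
  have key := hLωA w u v
  rw [fderiv_omega_const hL A w u v (Y w), omegaL_eq hL, omegaL_eq hL] at key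
  rw [fderiv_iYomega hL hY A w v u, fderiv_iYomega hL hY A w u v]
  have s1 : fderiv ℝ (fderiv ℝ (Theta L A)) w u v (Y w)
      = fderiv ℝ (fderiv ℝ (Theta L A)) w v u (Y w) :=
    congrArg (fun ℓ => ℓ (Y w)) (Theta_snd_symm hL A w u v)
  have s2 : fderiv ℝ (fderiv ℝ (Theta L A)) w u (Y w) v
      = fderiv ℝ (fderiv ℝ (Theta L A)) w (Y w) u v :=
    congrArg (fun ℓ => ℓ v) (Theta_snd_symm hL A w u (Y w))
  have s3 : fderiv ℝ (fderiv ℝ (Theta L A)) w v (Y w) u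
      = fderiv ℝ (fderiv ℝ (Theta L A)) w (Y w) v u :=
    congrArg (fun ℓ => ℓ u) (Theta_snd_symm hL A w v (Y w))
  linarith

lemma fderiv_betaC_symm (hL : ContDiff ℝ ∞ L) (hY : ContDiff ℝ ∞ Y) (A : Fin k)
    (hLωA : ∀ (w u v : KBundle n k),
      fderiv ℝ (fun x => omegaL L A x u v) w (Y w)
        + omegaL L A w (fderiv ℝ Y w u) v + omegaL L A w u (fderiv ℝ Y w v) = 0)
    (w u v : KBundle n k) :
    fderiv ℝ (betaC L Y A) w u v = fderiv ℝ (betaC L Y A) w v u := by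
  have hb : DifferentiableAt ℝ (betaC L Y A) w :=
    (contDiff_betaC hL hY A).differentiable one_le_inf w
  rw [← fderiv_clm_apply_const hb v u, ← fderiv_clm_apply_const hb u v]
  have h1 : (fun x => betaC L Y A x v) = fun x => omegaL L A x (Y x) v := by
    funext x; rw [betaC_apply hL]
  have h2 : (fun x => betaC L Y A x u) = fun x => omegaL L A x (Y x) u := by
    funext x; rw [betaC_apply hL]
  rw [h1, h2, symm_iYomega hL hY A hLωA w u v]

end Noether

namespace Noether

section Poincare

variable {E : Type*} [NormedAddCommGroup E] [NormedSpace ℝ E] [FiniteDimensional ℝ E]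

/-- Local Poincaré lemma for 1-forms on a vector space: a closed smooth 1-form has
an explicit primitive given by integration along segments from `c`. -/
lemma hasFDerivAt_primitive (α : E → E →L[ℝ] ℝ) (hα : ContDiff ℝ ∞ α)
    (hsymm : ∀ x u v, fderiv ℝ α x u v = fderiv ℝ α x v u) (c w : E) :
    HasFDerivAt (fun x => ∫ s in (0:ℝ)..1, α (c + s • (x - c)) (x - c))
      (α w) w := by
  have hαd : Differentiable ℝ α := hα.differentiable one_le_inf
  set γ : E → ℝ → E := fun x s => c + s • (x - c) with hγdef
  set F' : E → ℝ → E →L[ℝ] ℝ := fun x s =>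
    α (γ x s) + s • ((ContinuousLinearMap.apply ℝ ℝ :
      E →L[ℝ] (E →L[ℝ] ℝ) →L[ℝ] ℝ) (x - c)).comp (fderiv ℝ α (γ x s)) with hF'def
  have hγcont : Continuous fun p : E × ℝ => γ p.1 p.2 := by
    simp only [hγdef]; fun_prop
  have hcontF' : Continuous fun p : E × ℝ => F' p.1 p.2 := by
    have h1 : Continuous fun p : E × ℝ => α (γ p.1 p.2) := hα.continuous.comp hγcont
    have h2 : Continuous fun p : E × ℝ => fderiv ℝ α (γ p.1 p.2) :=
      (hα.continuous_fderiv one_le_inf).comp hγcont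
    have h3 : Continuous fun p : E × ℝ =>
        (ContinuousLinearMap.apply ℝ ℝ : E →L[ℝ] (E →L[ℝ] ℝ) →L[ℝ] ℝ) (p.1 - c) :=
      (ContinuousLinearMap.apply ℝ ℝ :
        E →L[ℝ] (E →L[ℝ] ℝ) →L[ℝ] ℝ).continuous.comp (continuous_fst.sub continuous_const)
    have h4 : Continuous fun p : E × ℝ =>
        ((ContinuousLinearMap.apply ℝ ℝ : E →L[ℝ] (E →L[ℝ] ℝ) →L[ℝ] ℝ)
          (p.1 - c)).comp (fderiv ℝ α (γ p.1 p.2)) :=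
      isBoundedBilinearMap_comp.continuous.comp (h3.prodMk h2)
    exact h1.add (continuous_snd.smul h4)
  have h_diff : ∀ (s : ℝ) (x : E),
      HasFDerivAt (fun y => α (γ y s) (y - c)) (F' x s) x := by
    intro s x
    have hsub : HasFDerivAt (fun y : E => y - c) (ContinuousLinearMap.id ℝ E) x :=
      (hasFDerivAt_id x).sub_const c
    have hline : HasFDerivAt (fun y => γ y s) (s • ContinuousLinearMap.id ℝ E) x :=
      (hsub.const_smul s).const_add c
    have hc : HasFDerivAt (fun y => α (γ y s))
        ((fderiv ℝ α (γ x s)).comp (s • ContinuousLinearMap.id ℝ E)) x :=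
      ((hαd (γ x s)).hasFDerivAt).comp x hline
    have hd := hc.clm_apply hsub
    have heq : (α (γ x s)).comp (ContinuousLinearMap.id ℝ E)
        + ((fderiv ℝ α (γ x s)).comp (s • ContinuousLinearMap.id ℝ E)).flip (x - c)
        = F' x s := by
      ext v
      simp [hF'def, ContinuousLinearMap.smul_apply, mul_comm]
    rw [heq] at hd
    exact hd
  -- uniform bound on a compact set
  obtain ⟨C, hC⟩ := ((isCompact_closedBall w 1).prod
    (isCompact_uIcc (a := (0:ℝ)) (b := 1))).exists_bound_of_continuousOn
    hcontF'.continuousOn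
  have key := intervalIntegral.hasFDerivAt_integral_of_dominated_of_fderiv_le
    (μ := MeasureTheory.volume) (F := fun x s => α (γ x s) (x - c)) (F' := F')
    (x₀ := w) (a := 0) (b := 1) (bound := fun _ => C) (Metric.ball_mem_nhds w one_pos)
    (Filter.Eventually.of_forall fun x =>
      (Continuous.aestronglyMeasurable (by fun_prop)))
    (Continuous.intervalIntegrable (by fun_prop) 0 1)
    (Continuous.aestronglyMeasurable
      (hcontF'.comp (continuous_const.prodMk continuous_id)))
    (Filter.Eventually.of_forall fun s hs x hx =>
      hC (x, s) ⟨Metric.ball_subset_closedBall hx, by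
        rw [Set.uIoc_of_le (zero_le_one' ℝ)] at hs
        exact Set.Ioc_subset_Icc_self.trans (Set.Icc_subset_uIcc) hs⟩)
    (intervalIntegrable_const)
    (Filter.Eventually.of_forall fun s hs x hx => h_diff s x)
  have hFint : IntervalIntegrable (F' w) MeasureTheory.volume 0 1 :=
    Continuous.intervalIntegrable
      (hcontF'.comp (continuous_const.prodMk continuous_id)) 0 1
  have hval : (∫ s in (0:ℝ)..1, F' w s) = α w := by
    refine ContinuousLinearMap.ext fun v => ?_
    rw [ContinuousLinearMap.intervalIntegral_apply hFint v]
    have hder : ∀ s : ℝ, HasDerivAt (fun r => r * α (γ w r) v) (F' w s v) s := by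
      intro s
      have hline : HasDerivAt (fun r : ℝ => γ w r) (w - c) s := by
        simpa [hγdef] using ((hasDerivAt_id s).smul_const (w - c)).const_add c
      have h1 : HasDerivAt (fun r => α (γ w r)) (fderiv ℝ α (γ w s) (w - c)) s :=
        (hαd (γ w s)).hasFDerivAt.comp_hasDerivAt s hline
      have h2 : HasDerivAt (fun r => α (γ w r) v)
          (fderiv ℝ α (γ w s) (w - c) v) s :=
        (ContinuousLinearMap.apply ℝ ℝ v).hasFDerivAt.comp_hasDerivAt s h1
      have h3 := (hasDerivAt_id s).mul h2
      have : F' w s v = 1 * α (γ w s) v + s * (fderiv ℝ α (γ w s) (w - c) v) := by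
        simp only [hF'def, ContinuousLinearMap.add_apply, ContinuousLinearMap.smul_apply,
          ContinuousLinearMap.coe_comp', Function.comp_apply,
          ContinuousLinearMap.apply_apply, smul_eq_mul, one_mul]
        rw [hsymm (γ w s) v (w - c)]
      rw [this]
      exact h3
    have hint2 : IntervalIntegrable (fun s => F' w s v) MeasureTheory.volume 0 1 := by
      have : Continuous fun s => F' w s v :=
        isBoundedBilinearMap_apply.continuous.comp
          ((hcontF'.comp (continuous_const.prodMk continuous_id)).prodMk continuous_const)
      exact this.intervalIntegrable 0 1
    rw [intervalIntegral.integral_eq_sub_of_hasDerivAt (fun s _ => hder s) hint2]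
    simp [hγdef]
  rw [hval] at key
  exact key

end Poincare

end Noether

namespace Noether

variable {n k : ℕ} {L : KBundle n k → ℝ}

lemma clm_expand_v (ℓ : KBundle n k →L[ℝ] ℝ) (b : Fin k → Fin n → ℝ) :
    ℓ (0, b) = ∑ A, ∑ i, b A i * ℓ (0, Pi.single A (Pi.single i 1)) := by
  have hb2 : b = ∑ A, ∑ i, b A i • (Pi.single A (Pi.single i 1) : Fin k → Fin n → ℝ) := by
    funext B j
    simp only [Finset.sum_apply, Pi.smul_apply, Pi.single_apply, smul_eq_mul,
      mul_ite, mul_one, mul_zero]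
    simp [apply_ite (fun f : Fin n → ℝ => f j), Pi.single_apply, Finset.sum_ite_eq,
      mul_ite, mul_one, mul_zero]
  have hb : ((0, b) : KBundle n k)
      = ∑ A, ∑ i, b A i • ((0, Pi.single A (Pi.single i 1)) : KBundle n k) := by
    apply Prod.ext
    · simp [Prod.fst_sum, Prod.smul_fst]
    · simp only [Prod.snd_sum, Prod.smul_snd]
      exact hb2
  rw [hb]
  rw [map_sum]
  refine Finset.sum_congr rfl fun A _ => ?_
  rw [map_sum]
  refine Finset.sum_congr rfl fun i _ => ?_
  rw [map_smul, smul_eq_mul]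

lemma clm_expand_q (ℓ : KBundle n k →L[ℝ] ℝ) (a : Fin n → ℝ) :
    ℓ (a, 0) = ∑ i, a i * ℓ (Pi.single i 1, 0) := by
  have ha2 : a = ∑ i, a i • (Pi.single i 1 : Fin n → ℝ) := by
    funext j
    simp [Pi.single_apply, Finset.sum_ite_eq, mul_ite]
  have ha : ((a, 0) : KBundle n k) = ∑ i, a i • ((Pi.single i 1, 0) : KBundle n k) := by
    apply Prod.ext
    · simp only [Prod.fst_sum, Prod.smul_fst]
      exact ha2
    · simp [Prod.snd_sum, Prod.smul_snd]
  rw [ha, map_sum]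
  refine Finset.sum_congr rfl fun i _ => ?_
  rw [map_smul, smul_eq_mul]

lemma fderiv_dLv (hL : ContDiff ℝ ∞ L) (A : Fin k) (i : Fin n) (w z : KBundle n k) :
    fderiv ℝ (dLv L A i) w z
      = fderiv ℝ (fderiv ℝ L) w z (0, Pi.single A (Pi.single i 1)) := by
  have hG : DifferentiableAt ℝ (fderiv ℝ L) w :=
    (contDiff_infty_iff_fderiv.mp hL).2.differentiable one_le_inf w
  have h : dLv L A i = fun x => fderiv ℝ L x (0, Pi.single A (Pi.single i 1)) := rfl
  rw [h, fderiv_clm_apply_const hG _ z]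

lemma fderiv_energy (hL : ContDiff ℝ ∞ L) (w z : KBundle n k) :
    fderiv ℝ (energyL L) w z
      = (∑ A, ∑ i, w.2 A i * fderiv ℝ (dLv L A i) w z) - ∑ i, z.1 i * dLq L i w := by
  have hG : DifferentiableAt ℝ (fderiv ℝ L) w :=
    (contDiff_infty_iff_fderiv.mp hL).2.differentiable one_le_inf w
  set J : KBundle n k →L[ℝ] KBundle n k :=
    ContinuousLinearMap.prod 0 (ContinuousLinearMap.snd ℝ (Fin n → ℝ) (Fin k → Fin n → ℝ))
    with hJ
  have hJap : ∀ x : KBundle n k, J x = ((0 : Fin n → ℝ), x.2) := fun x => rfl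
  have hE : energyL L = fun x => (fun y => fderiv ℝ L y (J y)) x - L x := rfl
  rw [hE, fderiv_fun_sub (hG.clm_apply J.differentiable.differentiableAt)
    (hL.differentiable one_le_inf w)]
  rw [ContinuousLinearMap.sub_apply, fderiv_clm_apply hG J.differentiable.differentiableAt]
  rw [J.fderiv]
  simp only [ContinuousLinearMap.add_apply, ContinuousLinearMap.coe_comp',
    Function.comp_apply, ContinuousLinearMap.flip_apply]
  have e1 : fderiv ℝ (fderiv ℝ L) w z (J w)
      = ∑ A, ∑ i, w.2 A i * fderiv ℝ (dLv L A i) w z := by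
    rw [hJap w, clm_expand_v]
    exact Finset.sum_congr rfl fun A _ => Finset.sum_congr rfl fun i _ => by
      rw [fderiv_dLv hL A i w z]
  have e2 : fderiv ℝ L w (J z) = ∑ A, ∑ i, z.2 A i * dLv L A i w := by
    rw [hJap z, clm_expand_v]
    rfl
  have e3 : fderiv ℝ L w z = (∑ i, z.1 i * dLq L i w) + ∑ A, ∑ i, z.2 A i * dLv L A i w := by
    have hz : z = ((z.1, 0) : KBundle n k) + ((0, z.2) : KBundle n k) := by
      apply Prod.ext <;> simp
    rw [show fderiv ℝ L w z = fderiv ℝ L w ((z.1, (0:Fin k → Fin n → ℝ))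
        + ((0:Fin n → ℝ), z.2)) from by rw [← hz], map_add, clm_expand_q, clm_expand_v]
    rfl
  rw [e1, e2, e3]
  ring

end Noether

open Noether

/-- Noether's theorem (Lagrangian version) : let `L` be a regular Lagrangian and `Y`
an infinitesimal Cartan symmetry of the `k`-symplectic Lagrangian system
`(T¹ₖQ, ω_Lᴬ, E_L)`, i.e. `L(Y)ω_Lᴬ = 0` and `L(Y)E_L = 0`.  Then around every
point `p ∈ T¹ₖQ` there is an open neighbourhood `U` and functions
`fᴬ = i(Y)θ_Lᴬ − ζᴬ` (`A = 1,…,k`), with `i(Y)ω_Lᴬ = dfᴬ` and `L(Y)θ_Lᴬ = dζᴬ`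
on `U`, which define a conservation law `f = (f¹,…,fᵏ)` for the Euler–Lagrange
equations on `U`: `Σ_A ∂(fᴬ∘φ⁽¹⁾)/∂tᴬ = 0` along every solution `φ` while its
prolongation stays in `U`. -/
theorem noether_theorem_lagrangian
    {n k : ℕ} (L : KBundle n k → ℝ) (hL : ContDiff ℝ (⊤ : ℕ∞) L) (hreg : RegularLag L)
    (Y : KBundle n k → KBundle n k) (hY : ContDiff ℝ (⊤ : ℕ∞) Y)
    (hLω : ∀ (A : Fin k) (w u v : KBundle n k),
      fderiv ℝ (fun x => omegaL L A x u v) w (Y w)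
        + omegaL L A w (fderiv ℝ Y w u) v + omegaL L A w u (fderiv ℝ Y w v) = 0)
    (hLE : ∀ w, fderiv ℝ (energyL L) w (Y w) = 0) :
    ∀ p : KBundle n k, ∃ U : Set (KBundle n k), IsOpen U ∧ p ∈ U ∧
      ∃ f ζ : Fin k → KBundle n k → ℝ,
        (∀ A : Fin k,
          DifferentiableOn ℝ (f A) U ∧
          (∀ w ∈ U, ∀ v, fderiv ℝ (f A) w v = omegaL L A w (Y w) v) ∧
          DifferentiableOn ℝ (ζ A) U ∧
          (∀ w ∈ U, ∀ v, fderiv ℝ (ζ A) w v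
            = fderiv ℝ (fun x => thetaL L A x v) w (Y w)
              + thetaL L A w (fderiv ℝ Y w v)) ∧
          (∀ w ∈ U, f A w = thetaL L A w (Y w) - ζ A w)) ∧
        -- `f = (f¹,…,fᵏ)` is a conservation law on `U`:
        (∀ (V : Set (Fin k → ℝ)) (φ : (Fin k → ℝ) → (Fin n → ℝ)),
          IsOpen V → IsELSolutionOn L φ V →
          ∀ t ∈ V, prolong1 φ t ∈ U →
            ∑ A, fderiv ℝ (fun s => f A (prolong1 φ s)) t (Pi.single A 1) = 0) := by
  intro p
  have hL' : ContDiff ℝ ∞ L := hL.of_le (by simp)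
  have hY' : ContDiff ℝ ∞ Y := hY.of_le (by simp)
  set f : Fin k → KBundle n k → ℝ := fun A x =>
    ∫ s in (0:ℝ)..1, betaC L Y A (p + s • (x - p)) (x - p) with hfdef
  set ζ : Fin k → KBundle n k → ℝ := fun A x => thetaL L A x (Y x) - f A x with hζdef
  have hprim : ∀ (A : Fin k) (w : KBundle n k),
      HasFDerivAt (f A) (betaC L Y A w) w := fun A w =>
    hasFDerivAt_primitive (betaC L Y A) (contDiff_betaC hL' hY' A)
      (fderiv_betaC_symm hL' hY' A (hLω A)) p w
  have hΘdiff : ∀ (A : Fin k) (w : KBundle n k),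
      DifferentiableAt ℝ (Theta L A) w := fun A w =>
    (contDiff_Theta hL' A).differentiable one_le_inf w
  have hθY : ∀ (A : Fin k) (w : KBundle n k),
      DifferentiableAt ℝ (fun x => thetaL L A x (Y x)) w := by
    intro A w
    have h : (fun x => thetaL L A x (Y x)) = fun x => Theta L A x (Y x) := by
      funext x; rw [Theta_apply]
    rw [h]
    exact (hΘdiff A w).clm_apply (hY'.differentiable one_le_inf w)
  refine ⟨Set.univ, isOpen_univ, Set.mem_univ p, f, ζ, fun A => ?_, ?_⟩
  · refine ⟨fun w _ => (hprim A w).differentiableAt.differentiableWithinAt,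
      fun w _ v => ?_, fun w _ => ?_, fun w _ v => ?_, fun w _ => ?_⟩
    · rw [(hprim A w).fderiv]
      exact betaC_apply hL' A w v
    · exact ((hθY A w).sub (hprim A w).differentiableAt).differentiableWithinAt
    · have hζA : ζ A = fun x => (fun y => thetaL L A y (Y y)) x - f A x := rfl
      rw [hζA, fderiv_fun_sub (hθY A w) (hprim A w).differentiableAt,
        ContinuousLinearMap.sub_apply, (hprim A w).fderiv]
      have h1 : (fun y => thetaL L A y (Y y)) = fun y => Theta L A y (Y y) := by
        funext x; rw [Theta_apply]
      rw [h1, fderiv_clm_apply (hΘdiff A w) (hY'.differentiable one_le_inf w)]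
      rw [fderiv_thetaL_eq hL']
      simp only [ContinuousLinearMap.add_apply, ContinuousLinearMap.coe_comp',
        Function.comp_apply, ContinuousLinearMap.flip_apply, betaC,
        ContinuousLinearMap.sub_apply, ContinuousLinearMap.apply_apply,
        ← Theta_apply (L := L) A w]
      ring
    · exact (sub_sub_cancel _ _).symm
  · -- conservation law
    intro V φ hV hsol t htV _
    obtain ⟨hφ, hEL⟩ := hsol
    have hφ' : ContDiffOn ℝ ∞ φ V := hφ.of_le (by simp)
    set w := prolong1 φ t with hw
    have hpro : ContDiffOn ℝ ∞ (prolong1 φ) V := by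
      refine ContDiffOn.prodMk hφ' ?_
      refine contDiffOn_pi.mpr fun A => contDiffOn_pi.mpr fun i => ?_
      have hfi : ContDiffOn ℝ ∞ (fun s => φ s i) V :=
        (ContinuousLinearMap.proj i :
          (Fin n → ℝ) →L[ℝ] ℝ).contDiff.comp_contDiffOn hφ'
      have hdfi : ContDiffOn ℝ ∞ (fderiv ℝ (fun s => φ s i)) V :=
        hfi.fderiv_of_isOpen hV (by simp)
      exact hdfi.clm_apply contDiffOn_const
    have hproD : DifferentiableAt ℝ (prolong1 φ) t :=
      (hpro.contDiffAt (hV.mem_nhds htV)).differentiableAt one_le_inf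
    set X : Fin k → KBundle n k :=
      fun A => fderiv ℝ (prolong1 φ) t (Pi.single A 1) with hX
    have hchain : ∀ (g : KBundle n k → ℝ) (g' : KBundle n k →L[ℝ] ℝ),
        HasFDerivAt g g' w → ∀ A,
          fderiv ℝ (fun s => g (prolong1 φ s)) t (Pi.single A 1) = g' (X A) := by
      intro g g' hg A
      have h2 : HasFDerivAt (fun s => g (prolong1 φ s))
          (g'.comp (fderiv ℝ (prolong1 φ) t)) t :=
        hg.comp t hproD.hasFDerivAt
      rw [h2.fderiv]
      rfl
    have hX1 : ∀ (A : Fin k) (i : Fin n), (X A).1 i = w.2 A i := by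
      intro A i
      have h1 : HasFDerivAt φ
          ((ContinuousLinearMap.fst ℝ (Fin n → ℝ) (Fin k → Fin n → ℝ)).comp
            (fderiv ℝ (prolong1 φ) t)) t :=
        (ContinuousLinearMap.fst ℝ (Fin n → ℝ)
          (Fin k → Fin n → ℝ)).hasFDerivAt.comp t hproD.hasFDerivAt
      have h2 : HasFDerivAt (fun s => φ s i)
          ((ContinuousLinearMap.proj i :
              (Fin n → ℝ) →L[ℝ] ℝ).comp
            ((ContinuousLinearMap.fst ℝ (Fin n → ℝ) (Fin k → Fin n → ℝ)).comp
              (fderiv ℝ (prolong1 φ) t))) t :=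
        (ContinuousLinearMap.proj i :
          (Fin n → ℝ) →L[ℝ] ℝ).hasFDerivAt.comp t h1
      have h3 : w.2 A i = fderiv ℝ (fun s => φ s i) t (Pi.single A 1) := rfl
      rw [h3, h2.fderiv]
      rfl
    have hELw : ∀ i, ∑ A, fderiv ℝ (dLv L A i) w (X A) = dLq L i w := by
      intro i
      rw [← hEL t htV i]
      refine Finset.sum_congr rfl fun A _ => ?_
      exact (hchain (dLv L A i) (fderiv ℝ (dLv L A i) w)
        ((contDiff_dLv hL' A i).differentiable one_le_inf w).hasFDerivAt A).symm
    calc ∑ A, fderiv ℝ (fun s => f A (prolong1 φ s)) t (Pi.single A 1)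
        = ∑ A, betaC L Y A w (X A) :=
          Finset.sum_congr rfl fun A _ =>
            hchain (f A) (betaC L Y A w) (hprim A w) A
      _ = ∑ A, ((∑ i, fderiv ℝ (dLv L A i) w (X A) * (Y w).1 i)
            - ∑ i, fderiv ℝ (dLv L A i) w (Y w) * (X A).1 i) := by
          refine Finset.sum_congr rfl fun A _ => ?_
          simp only [betaC, ContinuousLinearMap.sub_apply,
            ContinuousLinearMap.coe_comp', Function.comp_apply,
            ContinuousLinearMap.apply_apply]
          rw [fderiv_Theta_coord hL', fderiv_Theta_coord hL']
      _ = (∑ i, (Y w).1 i * dLq L i w)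
            - ∑ A, ∑ i, w.2 A i * fderiv ℝ (dLv L A i) w (Y w) := by
          rw [Finset.sum_sub_distrib]
          congr 1
          · rw [Finset.sum_comm]
            refine Finset.sum_congr rfl fun i _ => ?_
            rw [← Finset.sum_mul, hELw i, mul_comm]
          · refine Finset.sum_congr rfl fun A _ => Finset.sum_congr rfl fun i _ => ?_
            rw [hX1 A i, mul_comm]
      _ = - fderiv ℝ (energyL L) w (Y w) := by
          rw [fderiv_energy hL' w (Y w)]
          ring
      _ = 0 := by rw [hLE w]; ring
end
end

section
/- (Noether.) If Y ∈ X(T^1_kQ) is an infinitesimal Cartan symmetry of the k-symplectic Lagrangian system (T^1_kQ, ω_L^A, E_L), and f^A ∈ C^∞(U_p) are local functions with i(Y)ω_L^A = df^A on a neighbourhood U_p, then for every k-vector field Γ = (Γ_1,…,Γ_k) ∈ X^k_L(T^1_kQ) one has Σ_{A=1}^k L(Γ_A)f^A = 0 on U_p. -/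
noncomputable section

open scoped BigOperators

/-- The `k`-vector field `Γ = (Γ₁,…,Γ_k)` belongs to `X^k_L(T¹ₖQ)`:
`Σ_A i(Γ_A)ω_Lᴬ = dE_L`. -/
def InXkL {n k : ℕ} (L : KBundle n k → ℝ)
    (X : Fin k → KBundle n k → KBundle n k) : Prop :=
  ∀ w v, ∑ A, omegaL L A w (X A w) v = fderiv ℝ (energyL L) w v

/-- Theorem (Noether) : if `Y` is an infinitesimal Cartan symmetry of the
`k`-symplectic Lagrangian system `(T¹ₖQ, ω_Lᴬ, E_L)` (i.e. `L(Y)ω_Lᴬ = 0` and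
`L(Y)E_L = 0`), and `fᴬ ∈ C^∞(U)` are local functions with `i(Y)ω_Lᴬ = dfᴬ` on a
neighbourhood `U`, then for every `k`-vector field `Γ = (Γ₁,…,Γ_k) ∈ X^k_L(T¹ₖQ)`
one has `Σ_A L(Γ_A)fᴬ = 0` on `U`. -/
theorem noether_conserved_along_XkL
    {n k : ℕ} (L : KBundle n k → ℝ) (hL : ContDiff ℝ (⊤ : ℕ∞) L)
    (Y : KBundle n k → KBundle n k) (hY : ContDiff ℝ (⊤ : ℕ∞) Y)
    (hLω : ∀ (A : Fin k) (w u v : KBundle n k),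
      fderiv ℝ (fun x => omegaL L A x u v) w (Y w)
        + omegaL L A w (fderiv ℝ Y w u) v + omegaL L A w u (fderiv ℝ Y w v) = 0)
    (hLE : ∀ w, fderiv ℝ (energyL L) w (Y w) = 0)
    (U : Set (KBundle n k)) (hU : IsOpen U)
    (f : Fin k → KBundle n k → ℝ)
    (hfdiff : ∀ A, DifferentiableOn ℝ (f A) U)
    (hf : ∀ A : Fin k, ∀ w ∈ U, ∀ v, fderiv ℝ (f A) w v = omegaL L A w (Y w) v)
    (Γ : Fin k → KBundle n k → KBundle n k) (hΓ : InXkL L Γ) :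
    ∀ w ∈ U, ∑ A, fderiv ℝ (f A) w (Γ A w) = 0 := by
  intro w hw
  have hanti : ∀ A u v, omegaL L A w u v = - omegaL L A w v u := by
    intro A u v; simp only [omegaL]; ring
  calc ∑ A, fderiv ℝ (f A) w (Γ A w)
      = ∑ A, omegaL L A w (Y w) (Γ A w) := by
        exact Finset.sum_congr rfl fun A _ => hf A w hw (Γ A w)
    _ = -∑ A, omegaL L A w (Γ A w) (Y w) := by
        rw [← Finset.sum_neg_distrib]
        exact Finset.sum_congr rfl fun A _ => by rw [hanti]
    _ = -(fderiv ℝ (energyL L) w (Y w)) := by rw [hΓ w (Y w)]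
    _ = 0 := by rw [hLE w]; ring
end
end
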